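/- For all n, r ∈ ℕ≥1: Σ_{d|r} c_r(r/d) c_d(n) = r if gcd(n,r) = 1, and Σ_{d|r} c_r(r/d) c_d(n) = 0 otherwise. -/

import Mathlib

open Finset

/-- The discrete Fourier transform of an `r`-periodic arithmetic function:
`f̂(n) = Σ_{k=1}^{r} f(k) exp(−2πikn/r)`. -/
noncomputable def dft (r : ℕ) (f : ℕ → ℂ) (n : ℕ) : ℂ :=
  ∑ k ∈ Finset.Icc 1 r, f k * Complex.exp (-(2 * (Real.pi : ℂ) * Complex.I * (k : ℂ) * (n : ℂ) / (r : ℂ)))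

/-- The Ramanujan sum `c_q(n) = Σ_{1≤k≤q, gcd(k,q)=1} exp(2πikn/q)`. -/
noncomputable def ram (q n : ℕ) : ℂ :=
  ∑ k ∈ (Finset.Icc 1 q).filter (fun k => Nat.gcd k q = 1),
    Complex.exp (2 * (Real.pi : ℂ) * Complex.I * (k : ℂ) * (n : ℂ) / (q : ℂ))

/-- `f` is `r`-even: `f(gcd(n,r)) = f(n)` for all `n ≥ 1`. -/
def IsREven (r : ℕ) (f : ℕ → ℂ) : Prop :=
  ∀ n : ℕ, 1 ≤ n → f (Nat.gcd n r) = f n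

/-- `f' = μ * f`, the Dirichlet convolution of the Möbius function with `f`. -/
noncomputable def moeConv (f : ℕ → ℂ) (n : ℕ) : ℂ :=
  ∑ d ∈ n.divisors, ((ArithmeticFunction.moebius d : ℤ) : ℂ) * f (n / d)

/-- `g` is multiplicative: `g(1) = 1` and `g(mn) = g(m)g(n)` whenever `gcd(m,n) = 1`. -/
def IsMult (g : ℕ → ℂ) : Prop :=
  g 1 = 1 ∧ ∀ m n : ℕ, 1 ≤ m → 1 ≤ n → Nat.Coprime m n → g (m * n) = g m * g n

namespace DftStmt6Aux

open ArithmeticFunction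

noncomputable def E (q k m : ℕ) : ℂ :=
  Complex.exp (2 * (Real.pi : ℂ) * Complex.I * (k : ℂ) * (m : ℂ) / (q : ℂ))

lemma ram_eq_sum_E (q n : ℕ) :
    ram q n = ∑ k ∈ (Finset.Icc 1 q).filter (fun k => Nat.gcd k q = 1), E q k n := rfl

lemma E_pow (q k m : ℕ) : E q k m = Complex.exp (2 * (Real.pi:ℂ) * Complex.I * m / q) ^ k := by
  rw [E, ← Complex.exp_nat_mul]; ring_nf

lemma twoPiI_ne : (2 * (Real.pi:ℂ) * Complex.I) ≠ 0 := by
  simp [Real.pi_ne_zero, Complex.I_ne_zero]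

lemma exp_eq_one (q m : ℕ) (hq : 1 ≤ q) :
    Complex.exp (2 * (Real.pi:ℂ) * Complex.I * m / q) = 1 ↔ q ∣ m := by
  have hq0 : (q:ℂ) ≠ 0 := Nat.cast_ne_zero.mpr (by omega)
  rw [Complex.exp_eq_one_iff]
  constructor
  · rintro ⟨c, hc⟩
    have h2 : (2 * (Real.pi:ℂ) * Complex.I) * m = (2 * (Real.pi:ℂ) * Complex.I) * (c * q) := by
      field_simp at hc; linear_combination (2 * (Real.pi:ℂ) * Complex.I) * hc
    have h3 : (m : ℂ) = (c : ℂ) * q := mul_left_cancel₀ twoPiI_ne h2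
    have h4 : (m : ℤ) = c * q := by exact_mod_cast h3
    exact Int.natCast_dvd_natCast.mp ⟨c, by rw [h4]; ring⟩
  · rintro ⟨c, rfl⟩
    exact ⟨c, by field_simp; simp⟩

lemma geom (q m : ℕ) (hq : 1 ≤ q) :
    ∑ k ∈ Finset.Icc 1 q, E q k m = if q ∣ m then (q:ℂ) else 0 := by
  have hq0 : (q:ℂ) ≠ 0 := Nat.cast_ne_zero.mpr (by omega)
  set z : ℂ := Complex.exp (2 * (Real.pi:ℂ) * Complex.I * m / q) with hz
  have hsum : ∑ k ∈ Finset.Icc 1 q, E q k m = ∑ k ∈ Finset.range q, z ^ (k+1) := by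
    rw [← Finset.Ico_add_one_right_eq_Icc, Finset.sum_Ico_eq_sum_range]
    exact Finset.sum_congr (by norm_num) fun k _ => by rw [E_pow, Nat.add_comm]
  have hzq : z ^ q = 1 := by
    rw [hz, ← Complex.exp_nat_mul]
    have : (q:ℂ) * (2 * (Real.pi:ℂ) * Complex.I * m / q) = (m:ℂ) * (2 * (Real.pi:ℂ) * Complex.I) := by
      field_simp
    rw [this]
    exact_mod_cast Complex.exp_int_mul_two_pi_mul_I m
  rw [hsum]
  by_cases hdvd : q ∣ m
  · rw [if_pos hdvd]
    have h1 : z = 1 := (exp_eq_one q m hq).mpr hdvd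
    simp [h1]
  · have hz1 : z ≠ 1 := fun h => hdvd ((exp_eq_one q m hq).mp h)
    rw [if_neg hdvd]
    simp only [pow_succ', ← Finset.mul_sum]
    rw [geom_sum_eq hz1, hzq]
    simp

lemma E_div (q d j m : ℕ) (hd : d ∣ q) (hd1 : 1 ≤ d) (hq : 1 ≤ q) :
    E q (d * j) m = E (q/d) j m := by
  have hd0 : (d:ℂ) ≠ 0 := Nat.cast_ne_zero.mpr (by omega)
  have hq0 : (q:ℂ) ≠ 0 := Nat.cast_ne_zero.mpr (by omega)
  have hcast : ((q/d : ℕ) : ℂ) = (q:ℂ) / d := by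
    rw [Nat.cast_div hd hd0]
  have hqd0 : ((q/d : ℕ) : ℂ) ≠ 0 := by
    rw [hcast]; exact div_ne_zero hq0 hd0
  rw [E, E, hcast]
  congr 1
  push_cast
  field_simp

lemma moebius_sum (m : ℕ) : ∑ d ∈ m.divisors, ((moebius d : ℤ) : ℂ) = if m = 1 then 1 else 0 := by
  have h := congrArg (fun f => f m) moebius_mul_coe_zeta
  simp only [coe_mul_zeta_apply, one_apply] at h
  have : ((∑ i ∈ m.divisors, moebius i : ℤ) : ℂ) = ((if m = 1 then 1 else 0 : ℤ) : ℂ) := by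
    exact_mod_cast congrArg (fun z : ℤ => (z : ℂ)) h
  simpa [Int.cast_sum] using this

lemma gcd_divisors (k q : ℕ) (hq : q ≠ 0) :
    (Nat.gcd k q).divisors = q.divisors.filter (fun d => d ∣ k) := by
  ext e
  simp only [Nat.mem_divisors, Finset.mem_filter]
  constructor
  · rintro ⟨he, -⟩
    exact ⟨⟨he.trans (Nat.gcd_dvd_right k q), hq⟩, he.trans (Nat.gcd_dvd_left k q)⟩
  · rintro ⟨⟨heq, -⟩, hek⟩
    exact ⟨Nat.dvd_gcd hek heq, Nat.gcd_ne_zero_right hq⟩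

lemma sum_multiples (q e : ℕ) (he : e ∣ q) (he1 : 1 ≤ e) (f : ℕ → ℂ) :
    ∑ k ∈ (Finset.Icc 1 q).filter (fun k => e ∣ k), f k = ∑ j ∈ Finset.Icc 1 (q/e), f (e * j) := by
  refine Finset.sum_nbij' (fun k => k / e) (fun j => e * j) ?_ ?_ ?_ ?_ ?_
  · intro k hk
    simp only [Finset.mem_filter, Finset.mem_Icc] at hk
    obtain ⟨⟨hk1, hkq⟩, hek⟩ := hk
    simp only [Finset.mem_Icc]
    exact ⟨(Nat.one_le_div_iff (by omega)).mpr (Nat.le_of_dvd (by omega) hek),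
      Nat.div_le_div_right hkq⟩
  · intro j hj
    simp only [Finset.mem_Icc] at hj
    simp only [Finset.mem_filter, Finset.mem_Icc]
    refine ⟨⟨by nlinarith [hj.1], ?_⟩, dvd_mul_right e j⟩
    calc e * j ≤ e * (q/e) := Nat.mul_le_mul_left e hj.2
      _ = q := Nat.mul_div_cancel' he
  · intro k hk
    simp only [Finset.mem_filter] at hk
    exact Nat.mul_div_cancel' hk.2
  · intro j hj
    exact Nat.mul_div_cancel_left j (by omega)
  · intro k hk
    simp only [Finset.mem_filter] at hk
    rw [Nat.mul_div_cancel' hk.2]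

lemma ram_eq (q m : ℕ) (hq : 1 ≤ q) :
    ram q m = ∑ e ∈ q.divisors, ((moebius e : ℤ) : ℂ) * (if (q/e) ∣ m then ((q/e : ℕ) : ℂ) else 0) := by
  have hq0 : q ≠ 0 := by omega
  rw [ram_eq_sum_E, Finset.sum_filter]
  have step1 : ∀ k ∈ Finset.Icc 1 q,
      (if Nat.gcd k q = 1 then E q k m else 0)
        = ∑ e ∈ q.divisors, (if e ∣ k then ((moebius e : ℤ) : ℂ) * E q k m else 0) := by
    intro k hk
    have : (if Nat.gcd k q = 1 then E q k m else 0)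
        = (∑ d ∈ (Nat.gcd k q).divisors, ((moebius d : ℤ) : ℂ)) * E q k m := by
      rw [moebius_sum]
      by_cases h : Nat.gcd k q = 1 <;> simp [h]
    rw [this, gcd_divisors k q hq0, Finset.sum_filter, Finset.sum_mul]
    exact Finset.sum_congr rfl fun e _ => by by_cases h : e ∣ k <;> simp [h]
  rw [Finset.sum_congr rfl step1, Finset.sum_comm]
  refine Finset.sum_congr rfl fun e he => ?_
  obtain ⟨heq, -⟩ := Nat.mem_divisors.mp he
  have he1 : 1 ≤ e := Nat.pos_of_mem_divisors he
  rw [← Finset.sum_filter, sum_multiples q e heq he1]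
  have : ∀ j ∈ Finset.Icc 1 (q/e), ((moebius e : ℤ) : ℂ) * E q (e*j) m
      = ((moebius e : ℤ) : ℂ) * E (q/e) j m := fun j _ => by rw [E_div q e j m heq he1 hq]
  rw [Finset.sum_congr rfl this, ← Finset.mul_sum,
    geom (q/e) m (Nat.one_le_div_iff (by omega) |>.mpr (Nat.le_of_dvd (by omega) heq))]

lemma gcd_mul_div (r d k : ℕ) (hr : 1 ≤ r) (hd : d ∣ r) (hd1 : 1 ≤ d) (hk : Nat.gcd k d = 1) :
    Nat.gcd (k * (r / d)) r = r / d := by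
  obtain ⟨c, rfl⟩ := hd
  rw [Nat.mul_div_cancel_left c (by omega : 0 < d), Nat.gcd_mul_right, hk, one_mul]

lemma fiber_sum (r : ℕ) (hr : 1 ≤ r) (F : ℕ → ℕ → ℂ) :
    ∑ d ∈ r.divisors, ∑ k ∈ (Finset.Icc 1 d).filter (fun k => Nat.gcd k d = 1), F d k
      = ∑ j ∈ Finset.Icc 1 r, F (r / Nat.gcd j r) (j / Nat.gcd j r) := by
  have hr0 : r ≠ 0 := by omega
  have hmaps : ∀ j ∈ Finset.Icc 1 r, r / Nat.gcd j r ∈ r.divisors := by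
    intro j hj
    exact Nat.mem_divisors.mpr ⟨Nat.div_dvd_of_dvd (Nat.gcd_dvd_right j r), hr0⟩
  rw [← Finset.sum_fiberwise_of_maps_to hmaps (fun j => F (r / Nat.gcd j r) (j / Nat.gcd j r))]
  refine Finset.sum_congr rfl fun d hd => ?_
  · obtain ⟨hdr, -⟩ := Nat.mem_divisors.mp hd
    have hd1 : 1 ≤ d := Nat.pos_of_mem_divisors hd
    have hrd1 : 1 ≤ r / d := (Nat.one_le_div_iff (by omega)).mpr (Nat.le_of_dvd (by omega) hdr)
    have hrdr : (r/d) ∣ r := Nat.div_dvd_of_dvd hdr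
    refine Finset.sum_nbij' (fun k => k * (r / d)) (fun j => j / (r / d)) ?_ ?_ ?_ ?_ ?_
    · intro k hk
      simp only [Finset.mem_filter, Finset.mem_Icc] at hk ⊢
      obtain ⟨⟨hk1, hkd⟩, hkcop⟩ := hk
      have hg := gcd_mul_div r d k hr hdr hd1 hkcop
      refine ⟨⟨Nat.one_le_iff_ne_zero.mpr (Nat.mul_ne_zero (by omega) (by omega)), ?_⟩,
        by rw [hg, Nat.div_div_self hdr hr0]⟩
      calc k * (r/d) ≤ d * (r/d) := Nat.mul_le_mul_right _ hkd
        _ = r := Nat.mul_div_cancel' hdr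
    · intro j hj
      simp only [Finset.mem_filter, Finset.mem_Icc] at hj ⊢
      obtain ⟨⟨hj1, hjr⟩, hfib⟩ := hj
      have hgj : Nat.gcd j r ∣ r := Nat.gcd_dvd_right j r
      have hgeq : Nat.gcd j r = r / d := by
        rw [← hfib, Nat.div_div_self hgj hr0]
      have hgpos : 0 < Nat.gcd j r := Nat.gcd_pos_of_pos_left r (by omega)
      have hgdvdj : Nat.gcd j r ∣ j := Nat.gcd_dvd_left j r
      constructor
      · constructor
        · rw [← hgeq]
          exact (Nat.one_le_div_iff hgpos).mpr (Nat.le_of_dvd (by omega) hgdvdj)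
        · rw [← hgeq, ← hfib]
          exact Nat.div_le_div_right hjr
      · have := Nat.coprime_div_gcd_div_gcd (m := j) (n := r) hgpos
        rw [← hgeq, ← hfib]
        exact this
    · intro k hk
      exact Nat.mul_div_cancel k hrd1
    · intro j hj
      simp only [Finset.mem_filter, Finset.mem_Icc] at hj
      have hgeq : Nat.gcd j r = r / d := by
        rw [← hj.2, Nat.div_div_self (Nat.gcd_dvd_right j r) hr0]
      rw [← hgeq]
      exact Nat.div_mul_cancel (Nat.gcd_dvd_left j r)
    · intro k hk
      simp only [Finset.mem_filter, Finset.mem_Icc] at hk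
      have hg := gcd_mul_div r d k hr hdr hd1 hk.2
      rw [hg, Nat.div_div_self hdr hr0, Nat.mul_div_cancel k hrd1]

/-- Gauss: `Σ_{d|e} c_d(n) = e` if `e ∣ n`, else `0`. -/
lemma gauss (e n : ℕ) (he : 1 ≤ e) :
    ∑ d ∈ e.divisors, ram d n = if e ∣ n then (e:ℂ) else 0 := by
  have h1 : ∑ d ∈ e.divisors, ram d n
      = ∑ d ∈ e.divisors, ∑ k ∈ (Finset.Icc 1 d).filter (fun k => Nat.gcd k d = 1), E d k n :=
    Finset.sum_congr rfl fun d _ => ram_eq_sum_E d n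
  rw [h1, fiber_sum e he (fun d k => E d k n)]
  have h2 : ∀ j ∈ Finset.Icc 1 e, E (e / Nat.gcd j e) (j / Nat.gcd j e) n = E e j n := by
    intro j hj
    simp only [Finset.mem_Icc] at hj
    have hgpos : 0 < Nat.gcd j e := Nat.gcd_pos_of_pos_left e (by omega)
    have hgj : Nat.gcd j e ∣ j := Nat.gcd_dvd_left j e
    have hge : Nat.gcd j e ∣ e := Nat.gcd_dvd_right j e
    rw [← E_div e (Nat.gcd j e) (j / Nat.gcd j e) n hge hgpos he, Nat.mul_div_cancel' hgj]
  rw [Finset.sum_congr rfl h2, geom e n he]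

lemma aux_div_dvd (a b r : ℕ) (hab : a ∣ b) (hbr : b ∣ r) : r/b ∣ r/a := by
  obtain ⟨c, rfl⟩ := hab
  obtain ⟨s, rfl⟩ := hbr
  rcases Nat.eq_zero_or_pos a with rfl | ha
  · simp
  rcases Nat.eq_zero_or_pos c with rfl | hc
  · simp
  have h1 : a * c * s / (a * c) = s := Nat.mul_div_cancel_left _ (by positivity)
  have h2 : a * c * s / a = c * s := by
    rw [mul_assoc, Nat.mul_div_cancel_left _ ha]
  rw [h1, h2]
  exact dvd_mul_left s c

lemma div_dvd_div_iff' (r d e : ℕ) (hr : r ≠ 0) (hd : d ∣ r) (he : e ∣ r) :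
    (r/e) ∣ (r/d) ↔ d ∣ e := by
  constructor
  · intro h
    have h2 := aux_div_dvd (r/e) (r/d) r h (Nat.div_dvd_of_dvd hd)
    rwa [Nat.div_div_self hd hr, Nat.div_div_self he hr] at h2
  · intro h
    exact aux_div_dvd d e r h he

end DftStmt6Aux

open DftStmt6Aux ArithmeticFunction in
/-- `Σ_{d|r} c_r(r/d) c_d(n) = r` if `gcd(n,r) = 1`, and `0` otherwise. -/
theorem dft_stmt_6 (n r : ℕ) (hn : 1 ≤ n) (hr : 1 ≤ r) :
    (∑ d ∈ r.divisors, ram r (r / d) * ram d n) =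
      if Nat.gcd n r = 1 then (r : ℂ) else 0 := by
  have hr0 : r ≠ 0 := by omega
  have stepA : ∀ d ∈ r.divisors, ram r (r/d) * ram d n
      = ∑ e ∈ r.divisors, (if d ∣ e then ((moebius e : ℤ):ℂ) * ((r/e : ℕ):ℂ) * ram d n else 0) := by
    intro d hd
    obtain ⟨hdr, -⟩ := Nat.mem_divisors.mp hd
    rw [ram_eq r (r/d) hr, Finset.sum_mul]
    refine Finset.sum_congr rfl fun e he => ?_
    obtain ⟨her, -⟩ := Nat.mem_divisors.mp he
    have hiff := div_dvd_div_iff' r d e hr0 hdr her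
    by_cases h : d ∣ e
    · rw [if_pos (hiff.mpr h), if_pos h]
    · rw [if_neg (fun hc => h (hiff.mp hc)), if_neg h]; ring
  rw [Finset.sum_congr rfl stepA, Finset.sum_comm]
  have stepB : ∀ e ∈ r.divisors,
      (∑ d ∈ r.divisors, if d ∣ e then ((moebius e : ℤ):ℂ) * ((r/e : ℕ):ℂ) * ram d n else 0)
        = (if e ∣ n then ((moebius e : ℤ):ℂ) * (r:ℂ) else 0) := by
    intro e he
    obtain ⟨her, -⟩ := Nat.mem_divisors.mp he
    have he1 : 1 ≤ e := Nat.pos_of_mem_divisors he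
    rw [← Finset.sum_filter, Nat.divisors_filter_dvd_of_dvd hr0 her]
    have : ∑ d ∈ e.divisors, ((moebius e : ℤ):ℂ) * ((r/e : ℕ):ℂ) * ram d n
        = ((moebius e : ℤ):ℂ) * ((r/e : ℕ):ℂ) * ∑ d ∈ e.divisors, ram d n := by
      rw [Finset.mul_sum]
    rw [this, gauss e n he1]
    by_cases h : e ∣ n
    · rw [if_pos h, if_pos h]
      have : ((r/e : ℕ):ℂ) * (e:ℂ) = (r:ℂ) := by
        rw [← Nat.cast_mul, Nat.div_mul_cancel her]
      rw [mul_assoc, this]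
    · rw [if_neg h, if_neg h, mul_zero]
  rw [Finset.sum_congr rfl stepB, ← Finset.sum_filter]
  have hfilt : r.divisors.filter (fun e => e ∣ n) = (Nat.gcd n r).divisors := by
    ext a
    simp only [Finset.mem_filter, Nat.mem_divisors]
    constructor
    · rintro ⟨⟨har, -⟩, han⟩
      exact ⟨Nat.dvd_gcd han har, Nat.gcd_ne_zero_right hr0⟩
    · rintro ⟨hag, -⟩
      exact ⟨⟨hag.trans (Nat.gcd_dvd_right n r), hr0⟩, hag.trans (Nat.gcd_dvd_left n r)⟩
  rw [hfilt, ← Finset.sum_mul, moebius_sum]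
  by_cases h : Nat.gcd n r = 1
  · rw [if_pos h, if_pos h, one_mul]
  · rw [if_neg h, if_neg h, zero_mul]
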